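/- arXiv:1001.2436 — 6 statements merged into one kernel-verified Lean document; each statement's English description precedes it below -/
import Mathlib

section
/- Let q ≥ 1 be an integer and A ∈ SL(2,ℂ) with A ≠ I and A ≠ −I. If A^q = I or A^q = −I, then there exists a unique integer k with 1 ≤ k ≤ q−1 such that e^{ikπ/q} is an eigenvalue of A; moreover for this k one has tr A = 2cos(kπ/q) and A^q = (−1)^k·I. -/
open Complex

/-- `μ` is an eigenvalue of the matrix `A`. -/
def Matrix.IsEigenvalue (A : Matrix (Fin 2) (Fin 2) ℂ) (μ : ℂ) : Prop :=
  ∃ v : Fin 2 → ℂ, v ≠ 0 ∧ A.mulVec v = μ • v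

/-!
Every eigenvalue `μ` of `A` satisfies `μ ^ q = ±1`, so it is a power of the primitive `2q`-th
root of unity `ζ = exp (π i / q)`. Since `det A = 1`, the eigenvalues are the roots of
`X² - (tr A) X + 1`, so they are exactly `μ` and `μ⁻¹`, and `tr A = μ + μ⁻¹`. If `μ ≠ ±1`, exactly
one of `μ = ζ ^ m` and `μ⁻¹ = ζ ^ (2q - m)` has exponent in `[1, q - 1]`. The case `μ = ε = ±1`
is impossible: then `ε • A` is unipotent, and a unipotent matrix with a scalar power is `1` in
characteristic zero, so `A = ±1`.
-/

theorem one_add_pow_of_mul_self_eq_zero {R : Type*} [Semiring R] {N : R} (hN : N * N = 0)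
    (n : ℕ) : (1 + N) ^ n = 1 + n * N := by
  induction n with
  | zero => simp
  | succ n ih =>
    rw [pow_succ, ih]
    push_cast
    simp only [add_mul, mul_add, one_mul, mul_one, mul_assoc, hN, mul_zero, add_zero]
    abel

namespace Matrix

theorem eq_zero_of_mul_self_eq_zero_of_one_add_pow_eq_smul_one {n K : Type*} [Fintype n]
    [DecidableEq n] [Nonempty n] [Field K] [CharZero K] {N : Matrix n n K} (hN : N * N = 0)
    {q : ℕ} (hq : q ≠ 0) {c : K} (h : (1 + N) ^ q = c • 1) : N = 0 := by
  have hqN : (q : K) • N = (c - 1) • 1 := by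
    rw [one_add_pow_of_mul_self_eq_zero hN, add_comm, ← eq_sub_iff_add_eq] at h
    rw [sub_smul, one_smul, ← h, Nat.cast_smul_eq_nsmul, nsmul_eq_mul]
  have hc : (c - 1) ^ 2 = 0 := by
    have := congrArg (fun M => M * M) hqN
    simp only [smul_mul_smul, hN, smul_zero, mul_one] at this
    simpa [← sq] using this.symm
  rw [pow_eq_zero_iff two_ne_zero, sub_eq_zero] at hc
  simpa [hc, hq] using hqN

theorem sq_sub_trace_smul_add_det_smul_one_eq_zero {R : Type*} [CommRing R] [Nontrivial R]
    (M : Matrix (Fin 2) (Fin 2) R) : M ^ 2 - M.trace • M + M.det • 1 = 0 := by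
  simpa [charpoly_fin_two, Algebra.smul_def] using M.aeval_self_charpoly

variable {A : Matrix (Fin 2) (Fin 2) ℂ} {μ ν : ℂ}

theorem isEigenvalue_iff : A.IsEigenvalue μ ↔ μ ^ 2 - A.trace * μ + A.det = 0 := by
  have hdet : (A - μ • 1).det = μ ^ 2 - A.trace * μ + A.det := by
    simp [det_fin_two, trace_fin_two]
    ring
  rw [← hdet, ← exists_mulVec_eq_zero_iff]
  simp only [IsEigenvalue, sub_mulVec, smul_mulVec, one_mulVec, sub_eq_zero]

theorem exists_isEigenvalue (A : Matrix (Fin 2) (Fin 2) ℂ) : ∃ μ, A.IsEigenvalue μ := by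
  obtain ⟨μ, hμ⟩ := Complex.exists_root (f := A.charpoly) (by
    rw [charpoly_degree_eq_dim]; simp)
  exact ⟨μ, isEigenvalue_iff.2 (by simpa [charpoly_fin_two] using hμ)⟩

theorem IsEigenvalue.pow_eq_of_pow_eq_smul_one (h : A.IsEigenvalue μ) {n : ℕ} {c : ℂ}
    (hA : A ^ n = c • 1) : μ ^ n = c := by
  obtain ⟨v, hv, hAv⟩ := h
  have hpow : ∀ m : ℕ, (A ^ m) *ᵥ v = μ ^ m • v := by
    intro m
    induction m with
    | zero => simp
    | succ m ih => rw [pow_succ, ← mulVec_mulVec, hAv, mulVec_smul, ih, smul_smul, pow_succ']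
  have hn := hpow n
  rw [hA, smul_mulVec, one_mulVec] at hn
  exact (smul_left_injective ℂ hv hn).symm

theorem IsEigenvalue.eq_or_mul_eq_one (hdet : A.det = 1) (hμ : A.IsEigenvalue μ)
    (hν : A.IsEigenvalue ν) : μ = ν ∨ μ * ν = 1 := by
  rw [isEigenvalue_iff, hdet] at hμ hν
  have hfac : (μ - ν) * (μ + ν - A.trace) = 0 := by linear_combination hμ - hν
  rcases mul_eq_zero.1 hfac with h | h
  · exact .inl (sub_eq_zero.1 h)
  · exact .inr (by linear_combination -hμ + μ * h)

theorem IsEigenvalue.ne_zero (hdet : A.det = 1) (hμ : A.IsEigenvalue μ) : μ ≠ 0 := by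
  rintro rfl
  rw [isEigenvalue_iff, hdet] at hμ
  norm_num at hμ

theorem IsEigenvalue.inv (hdet : A.det = 1) (hμ : A.IsEigenvalue μ) : A.IsEigenvalue μ⁻¹ := by
  have hμ0 := hμ.ne_zero hdet
  rw [isEigenvalue_iff, hdet] at hμ ⊢
  field_simp
  linear_combination hμ

theorem IsEigenvalue.trace_eq_add_inv (hdet : A.det = 1) (hμ : A.IsEigenvalue μ) :
    A.trace = μ + μ⁻¹ := by
  have hμ0 := hμ.ne_zero hdet
  rw [isEigenvalue_iff, hdet] at hμ
  field_simp
  linear_combination -hμ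

theorem IsEigenvalue.eq_smul_one_of_pow_eq_smul_one {ε : ℂ} (hdet : A.det = 1) (hε : ε ^ 2 = 1)
    (h : A.IsEigenvalue ε) {q : ℕ} (hq : q ≠ 0) {c : ℂ} (hA : A ^ q = c • 1) : A = ε • 1 := by
  have htr : A.trace = 2 * ε := by
    rw [isEigenvalue_iff, hdet] at h
    linear_combination -ε * h + (ε - A.trace) * hε
  have hnil : (ε • A - 1) * (ε • A - 1) = 0 := by
    have hCH := A.sq_sub_trace_smul_add_det_smul_one_eq_zero
    rw [htr, hdet, one_smul] at hCH
    calc (ε • A - 1) * (ε • A - 1) = ε ^ 2 • A ^ 2 - (2 * ε) • A + 1 := by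
          simp only [sub_mul, mul_sub, smul_mul_smul, mul_smul, one_mul, mul_one, sq]
          module
      _ = 0 := by rw [hε, one_smul, hCH]
  have hpow : (1 + (ε • A - 1)) ^ q = (ε ^ q * c) • 1 := by
    rw [add_sub_cancel, smul_pow, hA, smul_smul]
  have hεA := eq_zero_of_mul_self_eq_zero_of_one_add_pow_eq_smul_one hnil hq hpow
  rw [sub_eq_zero] at hεA
  calc A = (ε ^ 2) • A := by rw [hε, one_smul]
    _ = ε • 1 := by rw [sq, mul_smul, hεA]

end Matrix

theorem IsPrimitiveRoot.pow_eq_neg_one {R : Type*} [CommRing R] [NoZeroDivisors R] {ζ : R}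
    {q : ℕ} (hζ : IsPrimitiveRoot ζ (2 * q)) (hq : q ≠ 0) : ζ ^ q = -1 :=
  IsPrimitiveRoot.eq_neg_one_of_two_right <| by
    simpa [hq] using hζ.pow_of_dvd hq (dvd_mul_left q 2)

theorem IsPrimitiveRoot.exists_pow_eq_or_pow_mul_eq_one {K : Type*} [Field K] {ζ μ : K} {q : ℕ}
    (hζ : IsPrimitiveRoot ζ (2 * q)) (hq : q ≠ 0) (hμ : μ ^ (2 * q) = 1) (h1 : μ ≠ 1)
    (h2 : μ ≠ -1) : ∃ k, 1 ≤ k ∧ k ≤ q - 1 ∧ (ζ ^ k = μ ∨ ζ ^ k * μ = 1) := by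
  have : NeZero (2 * q) := ⟨by omega⟩
  obtain ⟨m, hm, rfl⟩ := hζ.eq_pow_of_pow_eq_one hμ
  have hm0 : m ≠ 0 := by rintro rfl; exact h1 (pow_zero ζ)
  have hmq : m ≠ q := by rintro rfl; exact h2 (hζ.pow_eq_neg_one hq)
  rcases lt_or_gt_of_ne hmq with hlt | hgt
  · exact ⟨m, by omega, by omega, .inl rfl⟩
  · refine ⟨2 * q - m, by omega, by omega, .inr ?_⟩
    rw [← pow_add, Nat.sub_add_cancel hm.le, hζ.pow_eq_one]

theorem Complex.isPrimitiveRoot_exp_pi_mul_I_div {q : ℕ} (hq : q ≠ 0) :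
    IsPrimitiveRoot (exp (Real.pi * I / q)) (2 * q) := by
  convert isPrimitiveRoot_exp (2 * q) (by omega) using 2
  push_cast
  field_simp

/-- If `A ∈ SL(2,ℂ)`, `A ≠ ±I`, and `A^q = ±I` for some `q ≥ 1`, then there is a unique
integer `k` with `1 ≤ k ≤ q - 1` such that `e^{ikπ/q}` is an eigenvalue of `A`; moreover
for this `k` one has `tr A = 2 cos(kπ/q)` and `A^q = (-1)^k · I`. -/
theorem stmt_3 (q : ℕ) (hq : 1 ≤ q) (A : Matrix.SpecialLinearGroup (Fin 2) ℂ)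
    (hA1 : (A : Matrix (Fin 2) (Fin 2) ℂ) ≠ 1)
    (hA2 : (A : Matrix (Fin 2) (Fin 2) ℂ) ≠ -1)
    (hAq : ((A ^ q : Matrix.SpecialLinearGroup (Fin 2) ℂ) : Matrix (Fin 2) (Fin 2) ℂ) = 1 ∨
           ((A ^ q : Matrix.SpecialLinearGroup (Fin 2) ℂ) : Matrix (Fin 2) (Fin 2) ℂ) = -1) :
    (∃! k : ℕ, 1 ≤ k ∧ k ≤ q - 1 ∧
        Matrix.IsEigenvalue A.1 (Complex.exp ((k : ℂ) * Real.pi * Complex.I / q))) ∧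
    (∀ k : ℕ, 1 ≤ k → k ≤ q - 1 →
        Matrix.IsEigenvalue A.1 (Complex.exp ((k : ℂ) * Real.pi * Complex.I / q)) →
        Matrix.trace A.1 = 2 * Complex.cos ((k : ℂ) * Real.pi / q) ∧
        ((A ^ q : Matrix.SpecialLinearGroup (Fin 2) ℂ) : Matrix (Fin 2) (Fin 2) ℂ) =
          (-1 : ℂ) ^ k • 1) := by
  have hq0 : q ≠ 0 := by omega
  have hdet : (A : Matrix (Fin 2) (Fin 2) ℂ).det = 1 := A.2
  set ζ := exp (Real.pi * I / q)
  have hζ : IsPrimitiveRoot ζ (2 * q) := isPrimitiveRoot_exp_pi_mul_I_div hq0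
  have hexp : ∀ k : ℕ, exp (k * Real.pi * I / q) = ζ ^ k := fun k => by
    rw [← exp_nat_mul]; ring_nf
  obtain ⟨ε, hε, hAε⟩ : ∃ ε : ℂ, ε ^ 2 = 1 ∧ (A : Matrix (Fin 2) (Fin 2) ℂ) ^ q = ε • 1 := by
    rw [← Matrix.SpecialLinearGroup.coe_pow]
    rcases hAq with h | h
    · exact ⟨1, one_pow 2, by simp [h]⟩
    · exact ⟨-1, by norm_num, by simp [h]⟩
  obtain ⟨μ, hμ⟩ := Matrix.exists_isEigenvalue A
  have hμ2q : μ ^ (2 * q) = 1 := by rw [mul_comm, pow_mul, hμ.pow_eq_of_pow_eq_smul_one hAε, hε]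
  have hμ_ne : ∀ δ : ℂ, δ ^ 2 = 1 → (A : Matrix (Fin 2) (Fin 2) ℂ) ≠ δ • 1 → μ ≠ δ :=
    fun δ hδ hAδ hμδ => hAδ ((hμδ ▸ hμ).eq_smul_one_of_pow_eq_smul_one hdet hδ hq0 hAε)
  obtain ⟨k, hk1, hkq, hk⟩ := hζ.exists_pow_eq_or_pow_mul_eq_one hq0 hμ2q
    (hμ_ne 1 (one_pow 2) (by rwa [one_smul])) (hμ_ne (-1) (by norm_num) (by rwa [neg_one_smul]))
  have hkμ : Matrix.IsEigenvalue A (ζ ^ k) := by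
    rcases hk with hk | hk
    · rwa [hk]
    · rw [eq_inv_of_mul_eq_one_left hk]; exact hμ.inv hdet
  simp only [hexp]
  refine ⟨⟨k, ⟨hk1, hkq, hkμ⟩, fun j ⟨hj1, hjq, hj⟩ => ?_⟩, fun j hj1 hjq hj => ⟨?_, ?_⟩⟩
  · rcases hj.eq_or_mul_eq_one hdet hkμ with h | h
    · exact hζ.pow_inj (by omega) (by omega) h
    · exact absurd (pow_add ζ j k ▸ h) (hζ.pow_ne_one_of_pos_of_lt (by omega) (by omega))
  · rw [hj.trace_eq_add_inv hdet, two_cos, ← hexp, ← exp_neg]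
    congr 2 <;> ring
  · rw [Matrix.SpecialLinearGroup.coe_pow, hAε, ← hj.pow_eq_of_pow_eq_smul_one hAε, ← pow_mul,
      mul_comm, pow_mul, hζ.pow_eq_neg_one hq0]
end

section
/- Let p, q ≥ 2 be coprime integers and let A, B ∈ SL(2,ℂ) satisfy A^q = B^p. If A and B have no common eigenvector in ℂ², then A^q = I or A^q = −I, and there exist integers k, l with 1 ≤ k ≤ q−1, 1 ≤ l ≤ p−1 and k ≡ l (mod 2) such that tr A = 2cos(kπ/q) and tr B = 2cos(lπ/p). -/
open Complex

/-- `A` and `B` have a common eigenvector in `ℂ²`. -/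
def HasCommonEigenvector (A B : Matrix (Fin 2) (Fin 2) ℂ) : Prop :=
  ∃ v : Fin 2 → ℂ, v ≠ 0 ∧ (∃ a : ℂ, A.mulVec v = a • v) ∧ (∃ b : ℂ, B.mulVec v = b • v)

lemma cayley2 (M : Matrix (Fin 2) (Fin 2) ℂ) :
    M * M = (Matrix.trace M) • M - (M.det) • 1 := by
  rw [Matrix.trace_fin_two, Matrix.det_fin_two]
  ext i j
  fin_cases i <;> fin_cases j <;>
    simp [Matrix.mul_apply, Fin.sum_univ_two, Matrix.one_apply] <;> ring

lemma vne0 (v : Fin 2 → ℂ) (i : Fin 2) (h : v i ≠ 0) : v ≠ 0 := by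
  intro h0; apply h; rw [h0]; rfl

lemma ker_exists (N : Matrix (Fin 2) (Fin 2) ℂ) (h : N.det = 0) :
    ∃ v : Fin 2 → ℂ, v ≠ 0 ∧ N.mulVec v = 0 := by
  rw [Matrix.det_fin_two] at h
  by_cases h0 : N 0 0 = 0 ∧ N 0 1 = 0
  · by_cases h1 : N 1 0 = 0 ∧ N 1 1 = 0
    · refine ⟨![1, 0], vne0 _ 0 (by norm_num), ?_⟩
      ext i; fin_cases i <;>
        simp [Matrix.mulVec, dotProduct, Fin.sum_univ_two, h0.1, h0.2, h1.1, h1.2]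
    · refine ⟨![N 1 1, -(N 1 0)], ?_, ?_⟩
      · rcases not_and_or.1 h1 with hx | hx
        · exact vne0 _ 1 (by simpa using hx)
        · exact vne0 _ 0 (by simpa using hx)
      · ext i; fin_cases i <;>
          simp [Matrix.mulVec, dotProduct, Fin.sum_univ_two, h0.1, h0.2] <;> ring_nf <;>
          linear_combination h
  · refine ⟨![N 0 1, -(N 0 0)], ?_, ?_⟩
    · rcases not_and_or.1 h0 with hx | hx
      · exact vne0 _ 1 (by simpa using hx)
      · exact vne0 _ 0 (by simpa using hx)
    · ext i; fin_cases i <;>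
        simp [Matrix.mulVec, dotProduct, Fin.sum_univ_two] <;> ring_nf <;>
        linear_combination -h



lemma ker_prop (N : Matrix (Fin 2) (Fin 2) ℂ) (hN : N ≠ 0)
    (v w : Fin 2 → ℂ) (hv : N.mulVec v = 0) (hw : N.mulVec w = 0) (hv0 : v ≠ 0) :
    ∃ t : ℂ, w = t • v := by
  have hrow : ∃ i : Fin 2, ¬(N i 0 = 0 ∧ N i 1 = 0) := by
    by_contra h
    push_neg at h
    apply hN
    ext i j
    fin_cases j
    · simpa using (h i).1
    · simpa using (h i).2
  obtain ⟨i, hi⟩ := hrow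
  have hvi : N i 0 * v 0 + N i 1 * v 1 = 0 := by
    have := congrFun hv i
    simpa [Matrix.mulVec, dotProduct, Fin.sum_univ_two] using this
  have hwi : N i 0 * w 0 + N i 1 * w 1 = 0 := by
    have := congrFun hw i
    simpa [Matrix.mulVec, dotProduct, Fin.sum_univ_two] using this
  have cross : v 0 * w 1 = v 1 * w 0 := by
    rcases not_and_or.1 hi with hx | hx
    · have : N i 0 * (v 0 * w 1 - v 1 * w 0) = 0 := by linear_combination w 1 * hvi - v 1 * hwi
      rcases mul_eq_zero.1 this with h | h
      · exact absurd h hx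
      · linear_combination h
    · have : N i 1 * (v 0 * w 1 - v 1 * w 0) = 0 := by linear_combination v 0 * hwi - w 0 * hvi
      rcases mul_eq_zero.1 this with h | h
      · exact absurd h hx
      · linear_combination h
  have hv01 : v 0 ≠ 0 ∨ v 1 ≠ 0 := by
    by_contra h
    push_neg at h
    apply hv0
    ext j; fin_cases j
    · exact h.1
    · exact h.2
  rcases hv01 with h0 | h1
  · refine ⟨w 0 / v 0, ?_⟩
    ext j; fin_cases j
    · simp [smul_eq_mul]
      field_simp
    · simp [smul_eq_mul]
      rw [div_mul_eq_mul_div, eq_div_iff h0]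
      linear_combination cross
  · refine ⟨w 1 / v 1, ?_⟩
    ext j; fin_cases j
    · simp [smul_eq_mul]
      rw [div_mul_eq_mul_div, eq_div_iff h1]
      linear_combination -cross
    · simp [smul_eq_mul]
      field_simp

lemma eig_exists (M : Matrix (Fin 2) (Fin 2) ℂ) : ∃ c : ℂ, (M - c • 1).det = 0 := by
  obtain ⟨s, hs⟩ := IsAlgClosed.exists_pow_nat_eq
    ((M 0 0 + M 1 1) ^ 2 - 4 * (M 0 0 * M 1 1 - M 0 1 * M 1 0)) (n := 2) (by norm_num)
  refine ⟨(M 0 0 + M 1 1 + s) / 2, ?_⟩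
  rw [Matrix.det_fin_two]
  simp [Matrix.sub_apply, Matrix.one_apply]
  ring_nf
  linear_combination hs / 4

lemma mulVec_sub_smul (M : Matrix (Fin 2) (Fin 2) ℂ) (c : ℂ) (v : Fin 2 → ℂ)
    (h : (M - c • 1).mulVec v = 0) : M.mulVec v = c • v := by
  have := h
  rw [Matrix.sub_mulVec, sub_eq_zero] at this
  rw [this, Matrix.smul_mulVec, Matrix.one_mulVec]

lemma eigvec_exists (M : Matrix (Fin 2) (Fin 2) ℂ) :
    ∃ (c : ℂ) (v : Fin 2 → ℂ), v ≠ 0 ∧ M.mulVec v = c • v := by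
  obtain ⟨c, hc⟩ := eig_exists M
  obtain ⟨v, hv0, hv⟩ := ker_exists _ hc
  exact ⟨c, v, hv0, mulVec_sub_smul M c v hv⟩

lemma mulVec_pow (M : Matrix (Fin 2) (Fin 2) ℂ) (v : Fin 2 → ℂ) (a : ℂ)
    (h : M.mulVec v = a • v) (n : ℕ) : (M ^ n).mulVec v = a ^ n • v := by
  induction n with
  | zero => simp
  | succ n ih =>
    rw [pow_succ, ← Matrix.mulVec_mulVec, h, Matrix.mulVec_smul, ih, smul_smul,
      pow_succ, mul_comm]

lemma smul_vec_cancel {v : Fin 2 → ℂ} (hv : v ≠ 0) {a b : ℂ} (h : a • v = b • v) : a = b := by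
  have hv01 : v 0 ≠ 0 ∨ v 1 ≠ 0 := by
    by_contra hh
    push_neg at hh
    apply hv; ext j; fin_cases j
    · exact hh.1
    · exact hh.2
  rcases hv01 with h0 | h1
  · have := congrFun h 0
    simp only [Pi.smul_apply, smul_eq_mul] at this
    exact mul_right_cancel₀ h0 this
  · have := congrFun h 1
    simp only [Pi.smul_apply, smul_eq_mul] at this
    exact mul_right_cancel₀ h1 this

-- binomial with nilpotent
lemma pow_scalar_add_nil (η : ℂ) (N : Matrix (Fin 2) (Fin 2) ℂ) (hN : N * N = 0) :
    ∀ n : ℕ, (η • 1 + N) ^ (n + 1) = η ^ (n + 1) • 1 + ((n + 1 : ℕ) * η ^ n) • N := by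
  intro n
  induction n with
  | zero => simp
  | succ n ih =>
    rw [pow_succ, ih]
    simp only [add_mul, mul_add, Matrix.smul_mul, Matrix.mul_smul, hN, smul_zero, add_zero,
      Matrix.mul_one, Matrix.one_mul, smul_smul]
    push_cast
    module

lemma key (q : ℕ) (hq : 2 ≤ q) (M : Matrix (Fin 2) (Fin 2) ℂ) (hdet : M.det = 1)
    (hns : ∀ c : ℂ, M ≠ c • 1) (ε : ℂ) (hε : ε = 1 ∨ ε = -1)
    (hMq : M ^ q = ε • 1) :
    ∃ k : ℕ, 1 ≤ k ∧ k ≤ q - 1 ∧ (-1 : ℂ) ^ k = ε ∧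
      Matrix.trace M = ((2 * Real.cos (k * Real.pi / q) : ℝ) : ℂ) := by
  obtain ⟨α, hcdet⟩ := eig_exists M
  obtain ⟨v, hv0, hvker⟩ := ker_exists _ hcdet
  have hMv : M.mulVec v = α • v := mulVec_sub_smul M α v hvker
  have hchar : α * α - Matrix.trace M * α + 1 = 0 := by
    have h1 := hcdet
    rw [Matrix.det_fin_two] at h1
    rw [Matrix.det_fin_two] at hdet
    rw [Matrix.trace_fin_two]
    simp only [Matrix.sub_apply, Matrix.smul_apply, Matrix.one_apply, if_pos rfl,
      smul_eq_mul] at h1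
    norm_num at h1
    linear_combination h1 - hdet
  have hα0 : α ≠ 0 := by
    intro h; rw [h] at hchar; norm_num at hchar
  have hαq : α ^ q = ε := by
    have h1 := mulVec_pow M v α hMv q
    rw [hMq, Matrix.smul_mulVec, Matrix.one_mulVec] at h1
    exact smul_vec_cancel hv0 h1.symm
  have hε2 : ε * ε = 1 := by rcases hε with h | h <;> rw [h] <;> ring
  have hnpm : ∀ η : ℂ, η * η = 1 → α ≠ η := by
    intro η hη2 hcontra
    have hηne : η ≠ 0 := by intro h; rw [h] at hη2; norm_num at hη2
    have ht : Matrix.trace M = 2 * η := by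
      rw [hcontra] at hchar
      linear_combination (-η) * hchar + (η - Matrix.trace M) * hη2
    have hNN : (M - η • 1) * (M - η • 1) = 0 := by
      have hc := cayley2 M
      rw [hdet, ht] at hc
      have hexp : (M - η • 1) * (M - η • 1) = M * M - (2 * η) • M + (η * η) • 1 := by
        simp only [sub_mul, mul_sub, Matrix.smul_mul, Matrix.mul_smul, Matrix.one_mul,
          Matrix.mul_one, smul_smul]
        module
      rw [hexp, hc, hη2]
      module
    obtain ⟨q', rfl⟩ : ∃ q', q = q' + 1 := ⟨q - 1, by omega⟩
    have hbin := pow_scalar_add_nil η (M - η • 1) hNN q'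
    have hMdecomp : η • 1 + (M - η • 1) = M := by module
    rw [hMdecomp, hMq] at hbin
    have hc0 : ((q' + 1 : ℕ) : ℂ) * η ^ q' ≠ 0 :=
      mul_ne_zero (Nat.cast_ne_zero.mpr (by omega)) (pow_ne_zero _ hηne)
    have h2 : (((q' + 1 : ℕ) : ℂ) * η ^ q') • (M - η • 1) = (ε - η ^ (q' + 1)) • 1 := by
      rw [sub_smul]
      rw [hbin]
      module
    have h3 : M - η • 1 = ((((q' + 1 : ℕ) : ℂ) * η ^ q')⁻¹ * (ε - η ^ (q' + 1))) • 1 := by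
      rw [mul_smul, ← h2, smul_smul, inv_mul_cancel₀ hc0, one_smul]
    apply hns (η + (((q' + 1 : ℕ) : ℂ) * η ^ q')⁻¹ * (ε - η ^ (q' + 1)))
    rw [add_smul]
    rw [← h3]
    module
  have hα1 : α ≠ 1 := hnpm 1 (by norm_num)
  have hαm1 : α ≠ -1 := hnpm (-1) (by norm_num)
  have hq0 : (2 * q : ℕ) ≠ 0 := by omega
  have : NeZero (2 * q) := ⟨hq0⟩
  have hα2q : α ^ (2 * q) = 1 := by
    rw [mul_comm, pow_mul, hαq, sq, hε2]
  obtain ⟨m, hmlt, hm⟩ := (Complex.isPrimitiveRoot_exp (2 * q) hq0).eq_pow_of_pow_eq_one hα2q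
  have hqC : (q : ℂ) ≠ 0 := Nat.cast_ne_zero.mpr (by omega)
  have hαexp : α = Complex.exp (((m * Real.pi / q : ℝ) : ℂ) * I) := by
    rw [← hm, ← Complex.exp_nat_mul]
    congr 1
    push_cast
    field_simp
  have htr : Matrix.trace M = α + α⁻¹ := by
    field_simp
    linear_combination -hchar
  have hαinv : α⁻¹ = Complex.exp (-(((m * Real.pi / q : ℝ) : ℂ) * I)) := by
    rw [hαexp, ← Complex.exp_neg]
  have htrc : Matrix.trace M = ((2 * Real.cos (m * Real.pi / q) : ℝ) : ℂ) := by
    rw [htr, hαinv, hαexp]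
    push_cast
    rw [Complex.two_cos, neg_mul]
  have hεm : ε = (-1 : ℂ) ^ m := by
    rw [← hαq, hαexp, ← Complex.exp_nat_mul]
    have : ((q : ℕ) : ℂ) * (((m * Real.pi / q : ℝ) : ℂ) * I) = (m : ℕ) * (((Real.pi : ℝ) : ℂ) * I) := by
      push_cast
      field_simp
    rw [this, Complex.exp_nat_mul, Complex.exp_pi_mul_I]
  have hm0 : m ≠ 0 := by
    rintro rfl
    apply hα1
    rw [hαexp]
    norm_num
  have hmq : m ≠ q := by
    rintro rfl
    apply hαm1
    rw [hαexp]
    have : ((m : ℝ) * Real.pi / m : ℝ) = Real.pi := by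
      field_simp
    rw [this]
    exact_mod_cast Complex.exp_pi_mul_I
  rcases Nat.lt_or_ge m q with hlt | hge
  · exact ⟨m, by omega, by omega, hεm.symm, htrc⟩
  · have hgt : q < m := lt_of_le_of_ne hge (Ne.symm hmq)
    refine ⟨2 * q - m, by omega, by omega, ?_, ?_⟩
    · have h2m : ((-1 : ℂ) ^ m) * ((-1 : ℂ) ^ m) = 1 := by
        rw [← pow_add, ← two_mul, pow_mul]
        norm_num
      have h2qm : (-1 : ℂ) ^ (2 * q - m) * (-1 : ℂ) ^ m = 1 := by
        rw [← pow_add, show 2 * q - m + m = 2 * q from by omega, pow_mul]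
        norm_num
      calc (-1 : ℂ) ^ (2 * q - m) = (-1 : ℂ) ^ (2 * q - m) * ((-1 : ℂ) ^ m * (-1 : ℂ) ^ m) := by
            rw [h2m, mul_one]
        _ = ((-1 : ℂ) ^ (2 * q - m) * (-1 : ℂ) ^ m) * (-1 : ℂ) ^ m := by ring
        _ = (-1 : ℂ) ^ m := by rw [h2qm, one_mul]
        _ = ε := hεm.symm
    · rw [htrc]
      congr 2
      have hcast : ((2 * q - m : ℕ) : ℝ) = 2 * q - m := by
        push_cast [Nat.cast_sub (by omega : m ≤ 2 * q)]
        ring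
      rw [hcast]
      have : ((2 * q : ℝ) - m) * Real.pi / q = 2 * Real.pi - m * Real.pi / q := by
        field_simp
      rw [this, Real.cos_two_pi_sub]


/-- If `p, q ≥ 2` are coprime, `A, B ∈ SL(2,ℂ)` satisfy `A^q = B^p` and the pair `(A,B)`
is irreducible, then `A^q = ±I` and there are integers `k, l` with `1 ≤ k ≤ q-1`,
`1 ≤ l ≤ p-1`, `k ≡ l (mod 2)`, `tr A = 2cos(kπ/q)` and `tr B = 2cos(lπ/p)`. -/
theorem stmt_4 (p q : ℕ) (hp : 2 ≤ p) (hq : 2 ≤ q) (hpq : Nat.Coprime p q)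
    (A B : Matrix.SpecialLinearGroup (Fin 2) ℂ)
    (hAB : A ^ q = B ^ p)
    (hirr : ¬ HasCommonEigenvector A.1 B.1) :
    (((A ^ q : Matrix.SpecialLinearGroup (Fin 2) ℂ) : Matrix (Fin 2) (Fin 2) ℂ) = 1 ∨
     ((A ^ q : Matrix.SpecialLinearGroup (Fin 2) ℂ) : Matrix (Fin 2) (Fin 2) ℂ) = -1) ∧
    ∃ k l : ℕ, 1 ≤ k ∧ k ≤ q - 1 ∧ 1 ≤ l ∧ l ≤ p - 1 ∧ k % 2 = l % 2 ∧
      Matrix.trace A.1 = ((2 * Real.cos (k * Real.pi / q) : ℝ) : ℂ) ∧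
      Matrix.trace B.1 = ((2 * Real.cos (l * Real.pi / p) : ℝ) : ℂ) := by
  have hcoeA : ((A ^ q : Matrix.SpecialLinearGroup (Fin 2) ℂ) : Matrix (Fin 2) (Fin 2) ℂ)
      = A.1 ^ q := by
    simp [Matrix.SpecialLinearGroup.coe_pow]
  have hABm : A.1 ^ q = B.1 ^ p := by
    have := congrArg (fun X : Matrix.SpecialLinearGroup (Fin 2) ℂ =>
      (X : Matrix (Fin 2) (Fin 2) ℂ)) hAB
    simpa [Matrix.SpecialLinearGroup.coe_pow] using this
  -- Step 1 : A.1 ^ q = ±1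
  have hCpm : A.1 ^ q = 1 ∨ A.1 ^ q = -1 := by
    by_contra h
    push_neg at h
    obtain ⟨h1, hneg1⟩ := h
    obtain ⟨c, hcdet⟩ := eig_exists (A.1 ^ q)
    have hN0 : A.1 ^ q - c • 1 ≠ 0 := by
      intro h0
      rw [sub_eq_zero] at h0
      have hdetC : (A.1 ^ q).det = 1 := by
        rw [Matrix.det_pow, A.2, one_pow]
      rw [h0, Matrix.det_smul, Matrix.det_one] at hdetC
      simp only [Fintype.card_fin, mul_one] at hdetC
      have hfac : (c - 1) * (c + 1) = 0 := by linear_combination hdetC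
      rcases mul_eq_zero.1 hfac with hc | hc
      · apply h1
        rw [h0, show c = 1 from by linear_combination hc, one_smul]
      · apply hneg1
        rw [h0, show c = -1 from by linear_combination hc]
        simp
    obtain ⟨v, hv0, hvker⟩ := ker_exists _ hcdet
    have commA : (A.1 ^ q - c • 1) * A.1 = A.1 * (A.1 ^ q - c • 1) := by
      rw [sub_mul, mul_sub, ← pow_succ, ← pow_succ', Matrix.smul_mul, Matrix.mul_smul,
        Matrix.one_mul, Matrix.mul_one]
    have commB : (A.1 ^ q - c • 1) * B.1 = B.1 * (A.1 ^ q - c • 1) := by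
      rw [hABm, sub_mul, mul_sub, ← pow_succ, ← pow_succ', Matrix.smul_mul, Matrix.mul_smul,
        Matrix.one_mul, Matrix.mul_one]
    have hkA : (A.1 ^ q - c • 1).mulVec (A.1.mulVec v) = 0 := by
      rw [Matrix.mulVec_mulVec, commA, ← Matrix.mulVec_mulVec, hvker, Matrix.mulVec_zero]
    have hkB : (A.1 ^ q - c • 1).mulVec (B.1.mulVec v) = 0 := by
      rw [Matrix.mulVec_mulVec, commB, ← Matrix.mulVec_mulVec, hvker, Matrix.mulVec_zero]
    obtain ⟨a, ha⟩ := ker_prop _ hN0 v _ hvker hkA hv0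
    obtain ⟨b, hb⟩ := ker_prop _ hN0 v _ hvker hkB hv0
    exact hirr ⟨v, hv0, ⟨a, ha⟩, ⟨b, hb⟩⟩
  -- nonscalarity
  have hnsA : ∀ c : ℂ, A.1 ≠ c • 1 := by
    intro c hcA
    obtain ⟨b, v, hv0, hBv⟩ := eigvec_exists B.1
    exact hirr ⟨v, hv0, ⟨c, by rw [hcA, Matrix.smul_mulVec, Matrix.one_mulVec]⟩, ⟨b, hBv⟩⟩
  have hnsB : ∀ c : ℂ, B.1 ≠ c • 1 := by
    intro c hcB
    obtain ⟨a, v, hv0, hAv⟩ := eigvec_exists A.1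
    exact hirr ⟨v, hv0, ⟨a, hAv⟩, ⟨c, by rw [hcB, Matrix.smul_mulVec, Matrix.one_mulVec]⟩⟩
  -- choose ε
  obtain ⟨ε, hε, hCe⟩ : ∃ ε : ℂ, (ε = 1 ∨ ε = -1) ∧ A.1 ^ q = ε • 1 := by
    rcases hCpm with h | h
    · exact ⟨1, Or.inl rfl, by rw [h, one_smul]⟩
    · exact ⟨-1, Or.inr rfl, by rw [h]; simp⟩
  have hBe : B.1 ^ p = ε • 1 := by rw [← hABm, hCe]
  obtain ⟨k, hk1, hk2, hkε, hktr⟩ := key q hq A.1 A.2 hnsA ε hε hCe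
  obtain ⟨l, hl1, hl2, hlε, hltr⟩ := key p hp B.1 B.2 hnsB ε hε hBe
  refine ⟨by rw [hcoeA]; exact hCpm, k, l, hk1, hk2, hl1, hl2, ?_, hktr, hltr⟩
  have hkl : (-1 : ℂ) ^ k = (-1 : ℂ) ^ l := by rw [hkε, hlε]
  rcases Nat.even_or_odd k with hpk | hpk <;> rcases Nat.even_or_odd l with hpl | hpl
  · rw [Nat.even_iff.1 hpk, Nat.even_iff.1 hpl]
  · exfalso; rw [hpk.neg_one_pow, hpl.neg_one_pow] at hkl; norm_num at hkl
  · exfalso; rw [hpk.neg_one_pow, hpl.neg_one_pow] at hkl; norm_num at hkl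
  · rw [Nat.odd_iff.1 hpk, Nat.odd_iff.1 hpl]
end

section
/- Let p, q ≥ 2 be coprime integers, let k, l be integers with 1 ≤ k ≤ q−1, 1 ≤ l ≤ p−1 and k ≡ l (mod 2), and let z ∈ ℂ. Then there exist A, B ∈ SL(2,ℂ) with A^q = B^p, tr A = 2cos(kπ/q), tr B = 2cos(lπ/p), and tr(AB) = z. -/
/-!
Take `A = diag(α, α⁻¹)` with `α = exp(ikπ/q)`, so `A ^ q = (-1)^k`. Any `B ∈ SL(2, ℂ)` with trace
`β + β⁻¹`, `β = exp(ilπ/p) ≠ ±1`, has characteristic polynomial `(X - β)(X - β⁻¹)`, which divides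
`X ^ p - (-1)^l`; by Cayley–Hamilton `B ^ p = (-1)^l = (-1)^k`. For `B = !![a, a d - 1; 1, d]` with
`a + d` fixed, `tr(AB) = α a + α⁻¹ d` is a nonconstant affine function of `a` since `α ≠ α⁻¹`,
so it takes the value `z`.
-/

open Complex Matrix Polynomial

theorem Matrix.pow_eq_scalar_of_charpoly_dvd {n R : Type*} [Fintype n] [DecidableEq n]
    [CommRing R] {M : Matrix n n R} {m : ℕ} {w : R} (h : M.charpoly ∣ X ^ m - C w) :
    M ^ m = scalar n w := by
  obtain ⟨g, hg⟩ := h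
  have hM : aeval M (X ^ m - C w) = 0 := by rw [hg, map_mul, aeval_self_charpoly, zero_mul]
  rwa [map_sub, aeval_X_pow, aeval_C, sub_eq_zero] at hM

theorem Matrix.charpoly_fin_two_eq_mul {K : Type*} [Field K] {M : Matrix (Fin 2) (Fin 2) K}
    {β : K} (hβ : β ≠ 0) (htr : M.trace = β + β⁻¹) (hdet : M.det = 1) :
    M.charpoly = (X - C β) * (X - C β⁻¹) := by
  rw [charpoly_fin_two, htr, hdet, C_add, C_1]
  have : C β * C β⁻¹ = (1 : K[X]) := by rw [← C_mul, mul_inv_cancel₀ hβ, C_1]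
  linear_combination (-1 : K[X]) * this

theorem Polynomial.X_sub_C_mul_X_sub_C_dvd {K : Type*} [Field K] {a b w : K} (hab : a ≠ b)
    {m : ℕ} (ha : a ^ m = w) (hb : b ^ m = w) : (X - C a) * (X - C b) ∣ X ^ m - C w :=
  (isCoprime_X_sub_C_of_isUnit_sub (sub_ne_zero.2 hab).isUnit).mul_dvd
    (dvd_iff_isRoot.2 (by simp [ha])) (dvd_iff_isRoot.2 (by simp [hb]))

theorem Matrix.SpecialLinearGroup.pow_eq_scalar_of_trace {K : Type*} [Field K]
    (M : SpecialLinearGroup (Fin 2) K) {β w : K} (hβ : β ≠ β⁻¹)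
    (htr : (M : Matrix (Fin 2) (Fin 2) K).trace = β + β⁻¹) {m : ℕ} (hm : β ^ m = w)
    (hw : w ^ 2 = 1) :
    ((M ^ m : SpecialLinearGroup (Fin 2) K) : Matrix (Fin 2) (Fin 2) K) = scalar (Fin 2) w := by
  have hβ0 : β ≠ 0 := by rintro rfl; simp at hβ
  have hm' : β⁻¹ ^ m = w := by
    rw [inv_pow, hm]; exact inv_eq_of_mul_eq_one_right (by rw [← sq, hw])
  rw [SpecialLinearGroup.coe_pow]
  exact pow_eq_scalar_of_charpoly_dvd <| charpoly_fin_two_eq_mul hβ0 htr M.2 ▸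
    X_sub_C_mul_X_sub_C_dvd hβ hm hm'

theorem Matrix.SpecialLinearGroup.exists_trace_eq_trace_diag_mul_eq {K : Type*} [Field K]
    {α : K} (hα : α ≠ α⁻¹) (t z : K) :
    ∃ B : SpecialLinearGroup (Fin 2) K, (B : Matrix (Fin 2) (Fin 2) K).trace = t ∧
      (!![α, 0; 0, α⁻¹] * (B : Matrix (Fin 2) (Fin 2) K)).trace = z := by
  set a := (z - α⁻¹ * t) / (α - α⁻¹)
  have ha : a * (α - α⁻¹) = z - α⁻¹ * t := div_mul_cancel₀ _ (sub_ne_zero.2 hα)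
  refine ⟨⟨!![a, a * (t - a) - 1; 1, t - a], by simp [det_fin_two_of]⟩, ?_, ?_⟩
  · simp [trace_fin_two_of]
  · simp [trace_fin_two_of]; linear_combination ha

theorem Complex.exp_mul_I_add_inv (θ : ℝ) :
    exp (θ * I) + (exp (θ * I))⁻¹ = (2 * Real.cos θ : ℝ) := by
  rw [← exp_neg, ← neg_mul]; push_cast; rw [two_cos]

theorem Complex.exp_mul_I_ne_inv {θ : ℝ} (hθ : θ ∈ Set.Ioo 0 Real.pi) :
    exp (θ * I) ≠ (exp (θ * I))⁻¹ := by
  have hsin : sin (θ : ℂ) ≠ 0 := by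
    rw [← ofReal_sin]; exact ofReal_ne_zero.2 (Real.sin_pos_of_pos_of_lt_pi hθ.1 hθ.2).ne'
  have h2sin : exp (θ * I) - exp (-θ * I) = 2 * sin θ * I := by
    rw [two_sin]; ring_nf; rw [I_sq]; ring
  rw [← exp_neg, ← neg_mul, Ne, ← sub_eq_zero, h2sin]
  simp [hsin]

theorem Complex.exp_mul_pi_div_mul_I_pow (k q : ℕ) (hq : q ≠ 0) :
    exp ((k * Real.pi / q : ℝ) * I) ^ q = (-1) ^ k := by
  rw [← exp_nat_mul, ← exp_pi_mul_I, ← exp_nat_mul]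
  congr 1; push_cast; field_simp

theorem Real.natCast_mul_pi_div_natCast_mem_Ioo {j n : ℕ} (hj1 : 1 ≤ j) (hj2 : j ≤ n - 1) :
    (j * Real.pi / n : ℝ) ∈ Set.Ioo 0 Real.pi := by
  have hjn : (j : ℝ) < n := by exact_mod_cast (show j < n by omega)
  have hj : (0 : ℝ) < j := by exact_mod_cast hj1
  refine ⟨div_pos (mul_pos hj Real.pi_pos) (hj.trans hjn), ?_⟩
  rw [div_lt_iff₀ (hj.trans hjn), mul_comm Real.pi]
  exact mul_lt_mul_of_pos_right hjn Real.pi_pos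

theorem stmt_5_general (p q : ℕ)
    (k l : ℕ) (hk1 : 1 ≤ k) (hk2 : k ≤ q - 1) (hl1 : 1 ≤ l) (hl2 : l ≤ p - 1)
    (hkl : k % 2 = l % 2) (z : ℂ) :
    ∃ A B : Matrix.SpecialLinearGroup (Fin 2) ℂ,
      A ^ q = B ^ p ∧
      Matrix.trace A.1 = ((2 * Real.cos (k * Real.pi / q) : ℝ) : ℂ) ∧
      Matrix.trace B.1 = ((2 * Real.cos (l * Real.pi / p) : ℝ) : ℂ) ∧
      Matrix.trace ((A * B : Matrix.SpecialLinearGroup (Fin 2) ℂ) : Matrix (Fin 2) (Fin 2) ℂ) = z := by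
  set α := exp ((k * Real.pi / q : ℝ) * I)
  set β := exp ((l * Real.pi / p : ℝ) * I)
  have hα : α ≠ α⁻¹ := exp_mul_I_ne_inv (Real.natCast_mul_pi_div_natCast_mem_Ioo hk1 hk2)
  have hβ : β ≠ β⁻¹ := exp_mul_I_ne_inv (Real.natCast_mul_pi_div_natCast_mem_Ioo hl1 hl2)
  let A : SpecialLinearGroup (Fin 2) ℂ :=
    ⟨!![α, 0; 0, α⁻¹], by simp [det_fin_two_of, α, exp_ne_zero]⟩
  obtain ⟨B, hBtr, hABtr⟩ := SpecialLinearGroup.exists_trace_eq_trace_diag_mul_eq hα (β + β⁻¹) z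
  have hw : ((-1 : ℂ) ^ l) ^ 2 = 1 := by rw [← pow_mul, pow_mul', neg_one_sq, one_pow]
  have hαq : α ^ q = (-1) ^ l := by
    rw [exp_mul_pi_div_mul_I_pow k q (by omega), neg_one_pow_eq_pow_mod_two, hkl,
      ← neg_one_pow_eq_pow_mod_two]
  refine ⟨A, B, Subtype.ext ?_, (trace_fin_two_of ..).trans (exp_mul_I_add_inv _),
    hBtr.trans (exp_mul_I_add_inv _), hABtr⟩
  rw [A.pow_eq_scalar_of_trace hα (trace_fin_two_of ..) hαq hw,
    B.pow_eq_scalar_of_trace hβ hBtr (exp_mul_pi_div_mul_I_pow l p (by omega)) hw]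

/-- Given coprime `p, q ≥ 2`, an admissible pair `(k, l)` (i.e. `1 ≤ k ≤ q-1`,
`1 ≤ l ≤ p-1`, `k ≡ l (mod 2)`) and `z ∈ ℂ`, there exist `A, B ∈ SL(2,ℂ)` with
`A^q = B^p`, `tr A = 2cos(kπ/q)`, `tr B = 2cos(lπ/p)` and `tr(AB) = z`. -/
theorem stmt_5 (p q : ℕ) (hp : 2 ≤ p) (hq : 2 ≤ q) (hpq : Nat.Coprime p q)
    (k l : ℕ) (hk1 : 1 ≤ k) (hk2 : k ≤ q - 1) (hl1 : 1 ≤ l) (hl2 : l ≤ p - 1)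
    (hkl : k % 2 = l % 2) (z : ℂ) :
    ∃ A B : Matrix.SpecialLinearGroup (Fin 2) ℂ,
      A ^ q = B ^ p ∧
      Matrix.trace A.1 = ((2 * Real.cos (k * Real.pi / q) : ℝ) : ℂ) ∧
      Matrix.trace B.1 = ((2 * Real.cos (l * Real.pi / p) : ℝ) : ℂ) ∧
      Matrix.trace ((A * B : Matrix.SpecialLinearGroup (Fin 2) ℂ) : Matrix (Fin 2) (Fin 2) ℂ) = z :=
  stmt_5_general p q k l hk1 hk2 hl1 hl2 hkl z
end

section
/- Let p, q ≥ 2 be coprime integers and let k, l be integers with 1 ≤ k ≤ q−1, 1 ≤ l ≤ p−1 and k ≡ l (mod 2). If A, B ∈ SL(2,ℂ) satisfy A^q = B^p, tr A = 2cos(kπ/q), tr B = 2cos(lπ/p), and A and B have a common eigenvector in ℂ², then tr(AB) = 2cos(kπ/q + lπ/p) or tr(AB) = 2cos(kπ/q − lπ/p). -/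
/-- Eigenvalue of a 2×2 matrix of det 1: trace = a + a⁻¹. -/
lemma trace_eq_of_eig (M : Matrix (Fin 2) (Fin 2) ℂ) (hdet : M.det = 1)
    (v : Fin 2 → ℂ) (hv : v ≠ 0) (a : ℂ) (h : M.mulVec v = a • v) :
    a ≠ 0 ∧ Matrix.trace M = a + a⁻¹ := by
  have h0 : (M - a • 1).mulVec v = 0 := by
    rw [Matrix.sub_mulVec, Matrix.smul_mulVec, Matrix.one_mulVec, h, sub_self]
  have hd : (M - a • 1).det = 0 := by
    rw [← Matrix.exists_mulVec_eq_zero_iff]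
    exact ⟨v, hv, h0⟩
  rw [Matrix.det_fin_two] at hd hdet
  simp only [Matrix.sub_apply, Matrix.smul_apply, Matrix.one_apply, eq_self_iff_true, if_true,
    if_neg (by decide : (0:Fin 2) ≠ 1), if_neg (by decide : (1:Fin 2) ≠ 0),
    smul_eq_mul, mul_one, mul_zero, sub_zero] at hd
  have key : a * a - Matrix.trace M * a + 1 = 0 := by
    rw [Matrix.trace_fin_two]
    linear_combination hd - hdet
  have ha : a ≠ 0 := by
    intro h'; rw [h'] at key; simp at key
  refine ⟨ha, ?_⟩
  field_simp
  linear_combination -key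

lemma two_cos_eq (α : ℝ) :
    ((2 * Real.cos α : ℝ) : ℂ) = Complex.exp (α * Complex.I) + Complex.exp (-α * Complex.I) := by
  have h1 : (-(α:ℂ)) * Complex.I = ((-α : ℝ) : ℂ) * Complex.I := by push_cast; ring
  rw [Complex.exp_mul_I, h1, Complex.exp_mul_I]
  push_cast
  rw [Complex.cos_neg, Complex.sin_neg]
  ring

lemma eig_val (a : ℂ) (α : ℝ) (ha : a ≠ 0)
    (h : a + a⁻¹ = ((2 * Real.cos α : ℝ) : ℂ)) :
    a = Complex.exp (α * Complex.I) ∨ a = Complex.exp (-α * Complex.I) := by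
  set e := Complex.exp (α * Complex.I)
  set e' := Complex.exp (-α * Complex.I)
  have he : e * e' = 1 := by
    rw [← Complex.exp_add]
    simp [e, e']
  have hX : ((2 * Real.cos α : ℝ) : ℂ) = e + e' := two_cos_eq α
  have hinv : a * a⁻¹ = 1 := mul_inv_cancel₀ ha
  have h3 : (a - e) * (a - e') = 0 := by
    linear_combination a * h - hinv + a * hX + he
  rcases mul_eq_zero.mp h3 with h4 | h4
  · exact Or.inl (sub_eq_zero.mp h4)
  · exact Or.inr (sub_eq_zero.mp h4)

/-- For coprime `p, q ≥ 2` and an admissible pair `(k, l)`: if `A, B ∈ SL(2,ℂ)` satisfy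
`A^q = B^p`, `tr A = 2cos(kπ/q)`, `tr B = 2cos(lπ/p)` and `(A, B)` is reducible, then
`tr(AB) = 2cos(kπ/q + lπ/p)` or `tr(AB) = 2cos(kπ/q - lπ/p)`. -/
theorem stmt_8 (p q : ℕ) (hp : 2 ≤ p) (hq : 2 ≤ q) (hpq : Nat.Coprime p q)
    (k l : ℕ) (hk1 : 1 ≤ k) (hk2 : k ≤ q - 1) (hl1 : 1 ≤ l) (hl2 : l ≤ p - 1)
    (hkl : k % 2 = l % 2)
    (A B : Matrix.SpecialLinearGroup (Fin 2) ℂ)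
    (hAB : A ^ q = B ^ p)
    (htrA : Matrix.trace A.1 = ((2 * Real.cos (k * Real.pi / q) : ℝ) : ℂ))
    (htrB : Matrix.trace B.1 = ((2 * Real.cos (l * Real.pi / p) : ℝ) : ℂ))
    (hred : HasCommonEigenvector A.1 B.1) :
    Matrix.trace ((A * B : Matrix.SpecialLinearGroup (Fin 2) ℂ) : Matrix (Fin 2) (Fin 2) ℂ)
        = ((2 * Real.cos (k * Real.pi / q + l * Real.pi / p) : ℝ) : ℂ) ∨
    Matrix.trace ((A * B : Matrix.SpecialLinearGroup (Fin 2) ℂ) : Matrix (Fin 2) (Fin 2) ℂ)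
        = ((2 * Real.cos (k * Real.pi / q - l * Real.pi / p) : ℝ) : ℂ) := by
  obtain ⟨v, hv, ⟨a, ha⟩, ⟨b, hb⟩⟩ := hred
  set α := (k : ℝ) * Real.pi / q
  set β := (l : ℝ) * Real.pi / p
  obtain ⟨ha0, htA⟩ := trace_eq_of_eig A.1 A.2 v hv a ha
  obtain ⟨hb0, htB⟩ := trace_eq_of_eig B.1 B.2 v hv b hb
  have hABv : (A * B : Matrix.SpecialLinearGroup (Fin 2) ℂ).1.mulVec v = (a * b) • v := by
    rw [Matrix.SpecialLinearGroup.coe_mul, ← Matrix.mulVec_mulVec, hb, Matrix.mulVec_smul, ha,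
      smul_smul, mul_comm]
  obtain ⟨hab0, htAB⟩ := trace_eq_of_eig _ (A * B).2 v hv (a * b) hABv
  have hA' := eig_val a α ha0 (htA ▸ htrA)
  have hB' := eig_val b β hb0 (htB ▸ htrB)
  have key : ∀ θ : ℝ, a * b = Complex.exp (θ * Complex.I) →
      Matrix.trace ((A * B : Matrix.SpecialLinearGroup (Fin 2) ℂ) : Matrix (Fin 2) (Fin 2) ℂ)
        = ((2 * Real.cos θ : ℝ) : ℂ) := by
    intro θ hθ
    rw [htAB, hθ, ← Complex.exp_neg, two_cos_eq, neg_mul]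
  rcases hA' with hA' | hA' <;> rcases hB' with hB' | hB'
  · left
    refine key (α + β) ?_
    rw [hA', hB', ← Complex.exp_add]; push_cast; ring_nf
  · right
    refine key (α - β) ?_
    rw [hA', hB', ← Complex.exp_add]; push_cast; ring_nf
  · right
    have := key (-(α - β)) (by rw [hA', hB', ← Complex.exp_add]; push_cast; ring_nf)
    rwa [Real.cos_neg] at this
  · left
    have := key (-(α + β)) (by rw [hA', hB', ← Complex.exp_add]; push_cast; ring_nf)
    rwa [Real.cos_neg] at this
end

section
/- For every triple (x, y, z) ∈ ℂ³ there exist matrices A, B ∈ SL(2,ℂ) such that tr A = x, tr B = y, and tr(AB) = z. -/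
/-!
Take `A` the companion matrix of `t² - x t + 1`. For any unit `c` the matrix
`B = !![0, c; -c⁻¹, y]` lies in `SL(2)`, has trace `y`, and gives `tr (A * B) = c + c⁻¹`.
Over an algebraically closed field every `z` is of the form `c + c⁻¹`: take `c` a root of
`t² - z t + 1`.
-/

open Matrix Polynomial

section SL2

variable {R : Type*} [CommRing R]

def companionSL2 (x : R) : SpecialLinearGroup (Fin 2) R :=
  ⟨!![x, -1; 1, 0], by simp [det_fin_two_of]⟩

def antidiagSL2 (c : Rˣ) (y : R) : SpecialLinearGroup (Fin 2) R :=
  ⟨!![0, c; -↑c⁻¹, y], by simp [det_fin_two_of]⟩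

@[simp]
theorem trace_companionSL2 (x : R) : trace (companionSL2 x : Matrix (Fin 2) (Fin 2) R) = x := by
  simp [companionSL2, trace_fin_two_of]

@[simp]
theorem trace_antidiagSL2 (c : Rˣ) (y : R) :
    trace (antidiagSL2 c y : Matrix (Fin 2) (Fin 2) R) = y := by
  simp [antidiagSL2, trace_fin_two_of]

theorem trace_companionSL2_mul_antidiagSL2 (x : R) (c : Rˣ) (y : R) :
    trace ((companionSL2 x * antidiagSL2 c y : SpecialLinearGroup (Fin 2) R) :
      Matrix (Fin 2) (Fin 2) R) = c + ↑c⁻¹ := by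
  change trace (!![x, -1; 1, 0] * !![0, (c : R); -↑c⁻¹, y]) = _
  simp [trace_fin_two_of, add_comm]

end SL2

theorem IsAlgClosed.exists_unit_add_inv_eq {K : Type*} [Field K] [IsAlgClosed K] (z : K) :
    ∃ c : Kˣ, (c : K) + ↑c⁻¹ = z := by
  have hdeg : (X ^ 2 - C z * X + 1 : K[X]).degree = 2 := by compute_degree!
  obtain ⟨c, hc⟩ := IsAlgClosed.exists_root (X ^ 2 - C z * X + 1 : K[X]) (by simp [hdeg])
  have hc : c ^ 2 - z * c + 1 = 0 := by simpa using hc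
  have hc0 : c ≠ 0 := by rintro rfl; simp at hc
  refine ⟨Units.mk0 c hc0, ?_⟩
  simp only [Units.val_inv_eq_inv_val, Units.val_mk0]
  field_simp
  linear_combination hc

/-- Surjectivity of the trace coordinates: for every `(x, y, z) ∈ ℂ³` there exist
`A, B ∈ SL(2,ℂ)` with `tr A = x`, `tr B = y` and `tr(AB) = z`. -/
theorem stmt_9 (x y z : ℂ) :
    ∃ A B : Matrix.SpecialLinearGroup (Fin 2) ℂ,
      Matrix.trace A.1 = x ∧ Matrix.trace B.1 = y ∧
      Matrix.trace ((A * B : Matrix.SpecialLinearGroup (Fin 2) ℂ) : Matrix (Fin 2) (Fin 2) ℂ) = z := by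
  obtain ⟨c, hc⟩ := IsAlgClosed.exists_unit_add_inv_eq z
  exact ⟨companionSL2 x, antidiagSL2 c y, trace_companionSL2 x, trace_antidiagSL2 c y,
    (trace_companionSL2_mul_antidiagSL2 x c y).trans hc⟩
end

section
/- Let p, q ≥ 2 be coprime integers and let 𝒜 be the set of pairs of integers (k,l) with 1 ≤ k ≤ p−1, 1 ≤ l ≤ q−1 and k ≡ l (mod 2). For every function c : 𝒜 → ℂ there exists a unique family of complex numbers a(i,j), indexed by pairs (i,j) with 1 ≤ i ≤ p−1 and 1 ≤ j ≤ q−1, satisfying the symmetry a(i,j) = a(p−i, q−j) for all (i,j), and such that for every (k,l) ∈ 𝒜: ∑_{i=1}^{p−1} ∑_{j=1}^{q−1} a(i,j)·sin(π·i·k/p)·sin(π·j·l/q) = c(k,l). -/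
/-!
The kernel `sin (π i k / p)`, `1 ≤ i, k ≤ p - 1`, is symmetric in `i, k` and orthogonal:
`∑ᵢ sin (π i k / p) sin (π i k' / p) = (p / 2) δ_{k k'}` (the discrete sine transform is
self-inverse up to scaling). Hence the two-variable transform `T` satisfies `T (T a) = (pq/4) a`
on the box `[1, p-1] × [1, q-1]`. Since `sin (π (p - i) k / p) = (-1)^(k+1) sin (π i k / p)`,
reflecting `a` by `(i, j) ↦ (p - i, q - j)` multiplies `T a (k, l)` by `(-1)^(k+l)`, so `a` is
symmetric exactly when `T a` vanishes at the pairs of opposite parity. The unique solution is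
therefore `4 / (pq)` times the transform of `c` extended by zero outside `𝒜`.
-/

open Finset Real

theorem sum_range_cos_pi_mul_div {p : ℕ} {m : ℤ} (hm0 : m ≠ 0) (hm : |m| < 2 * p) :
    ∑ i ∈ range p, cos (π * m * i / p) = (1 - cos (π * m)) / 2 := by
  have hp : (0 : ℝ) < p := by
    have : (0 : ℤ) < p := by linarith [abs_nonneg m]
    exact_mod_cast this
  have hmR : |(m : ℝ)| < 2 * p := by exact_mod_cast hm
  set y := π * m / (2 * p) with hy
  have hy_ne : sin y ≠ 0 := by
    have hyπ : |y| < π := by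
      rw [hy, abs_div, abs_mul, abs_of_pos pi_pos, abs_of_pos (by positivity : (0 : ℝ) < 2 * p),
        div_lt_iff₀ (by positivity)]
      nlinarith [pi_pos]
    rw [Ne, sin_eq_zero_iff_of_lt_of_lt (neg_lt_of_abs_lt hyπ) (lt_of_abs_lt hyπ), hy]
    have : (m : ℝ) ≠ 0 := by exact_mod_cast hm0
    positivity
  -- Lagrange's identity with step `2y`; its right side collapses since `sin (π m) = 0`.
  have hsum := sin_mul_sum_cos p (2 * y) 0
  have hhalf : 2 * y / 2 = y := by ring
  have hfull : p * (2 * y) / 2 = π * m / 2 := by rw [hy]; field_simp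
  have hshift : (p - 1 : ℝ) * (2 * y) / 2 + 0 = π * m / 2 - y := by rw [hy]; field_simp; ring
  have hterm : ∀ i : ℕ, 2 * y * i + 0 = π * m * i / p := fun i => by rw [hy]; field_simp; ring
  have hsin : sin (π * m) = 0 := by simpa [mul_comm] using sin_int_mul_pi m
  have hsin2 := sin_two_mul (π * m / 2)
  have hcos2 := cos_two_mul_eq_one_sub (π * m / 2)
  rw [show 2 * (π * m / 2) = π * m by ring] at hsin2 hcos2
  simp only [hhalf, hfull, hshift, hterm, cos_sub] at hsum
  apply mul_left_cancel₀ hy_ne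
  linear_combination hsum - cos y / 2 * hsin2 + hsin * cos y / 2 + sin y / 2 * hcos2

noncomputable def sinKernel (n i k : ℕ) : ℝ := sin (π * i * k / n)

theorem sinKernel_comm (n i k : ℕ) : sinKernel n i k = sinKernel n k i := by
  simp only [sinKernel, mul_assoc, mul_comm (i : ℝ)]

theorem sum_Icc_sinKernel_mul_sinKernel {p k k' : ℕ} (hk : k ∈ Icc 1 (p - 1))
    (hk' : k' ∈ Icc 1 (p - 1)) :
    ∑ i ∈ Icc 1 (p - 1), sinKernel p i k * sinKernel p i k' =
      if k = k' then (p : ℝ) / 2 else 0 := by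
  rw [mem_Icc] at hk hk'
  have hIcc : Icc 1 (p - 1) = Ico 1 p := by ext; simp only [mem_Icc, mem_Ico]; omega
  have hrange : ∑ i ∈ Icc 1 (p - 1), sinKernel p i k * sinKernel p i k'
      = ∑ i ∈ range p, sinKernel p i k * sinKernel p i k' := by
    rw [sum_range_eq_add_Ico _ (by omega), hIcc]
    simp [sinKernel]
  have hprod : ∀ i : ℕ, 2 * (sinKernel p i k * sinKernel p i k')
      = cos (π * ((k - k' : ℤ) : ℝ) * i / p) - cos (π * ((k + k' : ℤ) : ℝ) * i / p) := by
    intro i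
    rw [sinKernel, sinKernel, ← mul_assoc, two_mul_sin_mul_sin]
    push_cast
    ring_nf
  have hsum := sum_range_cos_pi_mul_div (p := p) (m := k + k') (by omega) (by rw [abs_lt]; omega)
  have hcos : cos (π * ((k + k' : ℤ) : ℝ)) = cos (π * ((k - k' : ℤ) : ℝ)) := by
    rw [show π * ((k + k' : ℤ) : ℝ) = π * ((k - k' : ℤ) : ℝ) + (k' : ℕ) * (2 * π) by
      push_cast; ring, cos_add_nat_mul_two_pi]
  rw [hrange, ← mul_right_inj' (two_ne_zero' ℝ), mul_sum]
  simp only [hprod, sum_sub_distrib, hsum, hcos]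
  split_ifs with hkk'
  · subst hkk'
    simp only [sub_self, Int.cast_zero, mul_zero, zero_mul, zero_div, cos_zero, sum_const,
      card_range, nsmul_eq_mul, mul_one]
    ring
  · rw [sum_range_cos_pi_mul_div (by omega) (by rw [abs_lt]; omega)]
    ring

theorem sinKernel_sub_left {n i : ℕ} (hi : i ≤ n) (k : ℕ) :
    sinKernel n (n - i) k = (-1) ^ (k + 1) * sinKernel n i k := by
  rcases Nat.eq_zero_or_pos n with rfl | hn
  · simp [sinKernel]
  have hn' : (n : ℝ) ≠ 0 := by positivity
  rw [sinKernel, sinKernel, Nat.cast_sub hi,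
    show π * (n - i) * k / n = k * π - π * i * k / n by field_simp, sin_nat_mul_pi_sub]
  ring

theorem sinKernel_sub_right {n k : ℕ} (hk : k ≤ n) (i : ℕ) :
    sinKernel n i (n - k) = (-1) ^ (i + 1) * sinKernel n i k := by
  rw [sinKernel_comm, sinKernel_sub_left hk, sinKernel_comm]

theorem sum_Icc_one_sub_reflect {M : Type*} [AddCommMonoid M] (n : ℕ) (f : ℕ → M) :
    ∑ i ∈ Icc 1 (n - 1), f (n - i) = ∑ i ∈ Icc 1 (n - 1), f i := by
  have hIcc : Icc 1 (n - 1) = Ico 1 n := by ext; simp only [mem_Icc, mem_Ico]; omega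
  rw [hIcc, sum_Ico_reflect _ _ (Nat.le_succ n), Nat.add_sub_cancel, Nat.add_sub_cancel_left]

noncomputable def sinTransform (p q : ℕ) (a : ℕ → ℕ → ℂ) (k l : ℕ) : ℂ :=
  ∑ i ∈ Icc 1 (p - 1), ∑ j ∈ Icc 1 (q - 1), a i j * sinKernel p i k * sinKernel q j l

section sinTransform

variable {p q : ℕ}

theorem sinTransform_congr {a b : ℕ → ℕ → ℂ}
    (h : ∀ i ∈ Icc 1 (p - 1), ∀ j ∈ Icc 1 (q - 1), a i j = b i j) :
    sinTransform p q a = sinTransform p q b := by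
  ext k l
  exact sum_congr rfl fun i hi => sum_congr rfl fun j hj => by rw [h i hi j hj]

theorem sinTransform_const_mul (r : ℂ) (a : ℕ → ℕ → ℂ) (k l : ℕ) :
    sinTransform p q (fun i j => r * a i j) k l = r * sinTransform p q a k l := by
  simp only [sinTransform, mul_sum, mul_assoc]

theorem sinTransform_reflect (a : ℕ → ℕ → ℂ) (k l : ℕ) :
    sinTransform p q (fun i j => a (p - i) (q - j)) k l =
      (-1) ^ (k + l) * sinTransform p q a k l := by
  rw [sinTransform, ← sum_Icc_one_sub_reflect, sinTransform, mul_sum]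
  refine sum_congr rfl fun i hi => ?_
  rw [← sum_Icc_one_sub_reflect, mul_sum]
  refine sum_congr rfl fun j hj => ?_
  rw [mem_Icc] at hi hj
  rw [Nat.sub_sub_self (by omega), Nat.sub_sub_self (by omega), sinKernel_sub_left (by omega),
    sinKernel_sub_left (by omega)]
  push_cast
  ring

theorem sinTransform_sub_sub (a : ℕ → ℕ → ℂ) {k l : ℕ} (hk : k ≤ p) (hl : l ≤ q) :
    sinTransform p q a (p - k) (q - l) =
      sinTransform p q (fun i j => (-1) ^ (i + j) * a i j) k l := by
  refine sum_congr rfl fun i _ => sum_congr rfl fun j _ => ?_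
  rw [sinKernel_sub_right hk, sinKernel_sub_right hl]
  push_cast
  ring

theorem sinTransform_eq_zero_of_symm {a : ℕ → ℕ → ℂ}
    (ha : ∀ i ∈ Icc 1 (p - 1), ∀ j ∈ Icc 1 (q - 1), a (p - i) (q - j) = a i j)
    {k l : ℕ} (hkl : k % 2 ≠ l % 2) : sinTransform p q a k l = 0 := by
  have h := sinTransform_reflect (p := p) (q := q) a k l
  rw [sinTransform_congr ha, Odd.neg_one_pow (by rw [Nat.odd_iff]; omega)] at h
  linear_combination h / 2

theorem sinTransform_sinTransform (a : ℕ → ℕ → ℂ) {i j : ℕ} (hi : i ∈ Icc 1 (p - 1))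
    (hj : j ∈ Icc 1 (q - 1)) :
    sinTransform p q (sinTransform p q a) i j = p * q / 4 * a i j := by
  have hsplit : sinTransform p q (sinTransform p q a) i j
      = ∑ u ∈ Icc 1 (p - 1), ∑ v ∈ Icc 1 (q - 1),
        ∑ k ∈ Icc 1 (p - 1), ∑ l ∈ Icc 1 (q - 1),
        a u v * sinKernel p u k * sinKernel q v l * sinKernel p k i * sinKernel q l j := by
    simp only [sinTransform, sum_mul]
    refine (sum_congr rfl fun k _ => sum_comm).trans ?_
    refine (sum_congr rfl fun k _ => sum_congr rfl fun u _ => sum_comm).trans ?_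
    exact sum_comm.trans (sum_congr rfl fun u _ => sum_comm)
  have horth : ∀ u ∈ Icc 1 (p - 1), ∀ v ∈ Icc 1 (q - 1),
      ∑ k ∈ Icc 1 (p - 1), ∑ l ∈ Icc 1 (q - 1),
        a u v * sinKernel p u k * sinKernel q v l * sinKernel p k i * sinKernel q l j
      = if u = i ∧ v = j then p * q / 4 * a u v else 0 := by
    intro u hu v hv
    calc _ = a u v * ((∑ k ∈ Icc 1 (p - 1), sinKernel p k u * sinKernel p k i : ℝ) : ℂ)
          * ((∑ l ∈ Icc 1 (q - 1), sinKernel q l v * sinKernel q l j : ℝ) : ℂ) := by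
          rw [Complex.ofReal_sum, Complex.ofReal_sum, mul_assoc, sum_mul_sum, mul_sum]
          refine sum_congr rfl fun k _ => ?_
          rw [mul_sum]
          refine sum_congr rfl fun l _ => ?_
          rw [sinKernel_comm p u k, sinKernel_comm q v l]
          push_cast
          ring
      _ = _ := by
          rw [sum_Icc_sinKernel_mul_sinKernel hu hi, sum_Icc_sinKernel_mul_sinKernel hv hj]
          split_ifs <;> simp_all
          ring
  rw [hsplit, sum_congr rfl fun u hu => sum_congr rfl fun v hv => horth u hu v hv,
    sum_eq_single_of_mem i hi fun u _ hu => by simp [hu],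
    sum_eq_single_of_mem j hj fun v _ hv => by simp [hv], if_pos ⟨rfl, rfl⟩]

end sinTransform

noncomputable def sameParityPart (c : ℕ → ℕ → ℂ) (k l : ℕ) : ℂ :=
  if k % 2 = l % 2 then c k l else 0

theorem neg_one_pow_mul_sameParityPart (c : ℕ → ℕ → ℂ) (k l : ℕ) :
    (-1) ^ (k + l) * sameParityPart c k l = sameParityPart c k l := by
  unfold sameParityPart
  split_ifs with hkl
  · rw [Even.neg_one_pow (by rw [Nat.even_iff]; omega), one_mul]
  · rw [mul_zero]

noncomputable def symmetricSolution (p q : ℕ) (c : ℕ → ℕ → ℂ) (i j : ℕ) : ℂ :=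
  if 1 ≤ i ∧ i ≤ p - 1 ∧ 1 ≤ j ∧ j ≤ q - 1 then
    4 / (p * q) * sinTransform p q (sameParityPart c) i j
  else 0

section symmetricSolution

variable {p q : ℕ}

theorem four_div_mul_sinTransform_sinTransform (a : ℕ → ℕ → ℂ) {i j : ℕ}
    (hi : i ∈ Icc 1 (p - 1)) (hj : j ∈ Icc 1 (q - 1)) :
    4 / (p * q) * sinTransform p q (sinTransform p q a) i j = a i j := by
  have hp : (p : ℂ) ≠ 0 := by have := mem_Icc.1 hi; norm_cast; omega
  have hq : (q : ℂ) ≠ 0 := by have := mem_Icc.1 hj; norm_cast; omega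
  rw [sinTransform_sinTransform a hi hj]
  field_simp

theorem symmetricSolution_sub_sub (c : ℕ → ℕ → ℂ) {i j : ℕ} (hi : i ∈ Icc 1 (p - 1))
    (hj : j ∈ Icc 1 (q - 1)) :
    symmetricSolution p q c (p - i) (q - j) = symmetricSolution p q c i j := by
  rw [mem_Icc] at hi hj
  unfold symmetricSolution
  rw [if_pos (by omega), if_pos (by omega), sinTransform_sub_sub _ (by omega) (by omega)]
  simp only [neg_one_pow_mul_sameParityPart]

theorem sinTransform_symmetricSolution (c : ℕ → ℕ → ℂ) {k l : ℕ}
    (hk : k ∈ Icc 1 (p - 1)) (hl : l ∈ Icc 1 (q - 1)) :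
    sinTransform p q (symmetricSolution p q c) k l = sameParityPart c k l := by
  have hbox : ∀ i ∈ Icc 1 (p - 1), ∀ j ∈ Icc 1 (q - 1),
      symmetricSolution p q c i j = 4 / (p * q) * sinTransform p q (sameParityPart c) i j := by
    intro i hi j hj
    rw [mem_Icc] at hi hj
    exact if_pos (by omega)
  rw [sinTransform_congr hbox, sinTransform_const_mul,
    four_div_mul_sinTransform_sinTransform _ hk hl]

theorem eq_symmetricSolution {c a : ℕ → ℕ → ℂ}
    (ha_supp : ∀ i j, ¬(1 ≤ i ∧ i ≤ p - 1 ∧ 1 ≤ j ∧ j ≤ q - 1) → a i j = 0)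
    (ha_symm : ∀ i ∈ Icc 1 (p - 1), ∀ j ∈ Icc 1 (q - 1), a (p - i) (q - j) = a i j)
    (ha_eq : ∀ k ∈ Icc 1 (p - 1), ∀ l ∈ Icc 1 (q - 1), k % 2 = l % 2 →
      sinTransform p q a k l = c k l) :
    a = symmetricSolution p q c := by
  have hT : ∀ k ∈ Icc 1 (p - 1), ∀ l ∈ Icc 1 (q - 1),
      sinTransform p q a k l = sameParityPart c k l := by
    intro k hk l hl
    unfold sameParityPart
    split_ifs with hkl
    · exact ha_eq k hk l hl hkl
    · exact sinTransform_eq_zero_of_symm ha_symm hkl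
  funext i j
  unfold symmetricSolution
  split_ifs with h
  · rw [← sinTransform_congr hT,
      four_div_mul_sinTransform_sinTransform a (by simp [h]) (by simp [h])]
  · exact ha_supp i j h

end symmetricSolution

theorem stmt_14_general (p q : ℕ) (c : ℕ → ℕ → ℂ) :
    ∃! a : ℕ → ℕ → ℂ,
      (∀ i j : ℕ, ¬(1 ≤ i ∧ i ≤ p - 1 ∧ 1 ≤ j ∧ j ≤ q - 1) → a i j = 0) ∧
      (∀ i j : ℕ, 1 ≤ i → i ≤ p - 1 → 1 ≤ j → j ≤ q - 1 → a i j = a (p - i) (q - j)) ∧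
      (∀ k l : ℕ, 1 ≤ k → k ≤ p - 1 → 1 ≤ l → l ≤ q - 1 → k % 2 = l % 2 →
        ∑ i ∈ Finset.Icc 1 (p - 1), ∑ j ∈ Finset.Icc 1 (q - 1),
            a i j * ((Real.sin (Real.pi * i * k / p) : ℝ) : ℂ) *
              ((Real.sin (Real.pi * j * l / q) : ℝ) : ℂ) = c k l) := by
  refine ⟨symmetricSolution p q c, ⟨fun i j h => if_neg h, ?_, ?_⟩, ?_⟩
  · intro i j hi1 hi2 hj1 hj2
    exact (symmetricSolution_sub_sub c (mem_Icc.2 ⟨hi1, hi2⟩) (mem_Icc.2 ⟨hj1, hj2⟩)).symm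
  · intro k l hk1 hk2 hl1 hl2 hkl
    have h := sinTransform_symmetricSolution c (mem_Icc.2 ⟨hk1, hk2⟩) (mem_Icc.2 ⟨hl1, hl2⟩)
    rwa [sameParityPart, if_pos hkl] at h
  · rintro a ⟨ha_supp, ha_symm, ha_eq⟩
    refine eq_symmetricSolution ha_supp (fun i hi j hj => ?_) (fun k hk l hl hkl => ?_)
    · rw [mem_Icc] at hi hj
      exact (ha_symm i j hi.1 hi.2 hj.1 hj.2).symm
    · rw [mem_Icc] at hk hl
      exact ha_eq k l hk.1 hk.2 hl.1 hl.2 hkl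

/-- For coprime `p, q ≥ 2` and any values `c (k, l)` prescribed on the set `𝒜` of
admissible pairs (`1 ≤ k ≤ p-1`, `1 ≤ l ≤ q-1`, `k ≡ l (mod 2)`), there is a unique
family `a (i, j)` (`1 ≤ i ≤ p-1`, `1 ≤ j ≤ q-1`, encoded as a function `ℕ → ℕ → ℂ`
vanishing outside this index set) which is symmetric under `(i, j) ↦ (p-i, q-j)` and
satisfies `∑_{i,j} a (i, j) sin(πik/p) sin(πjl/q) = c (k, l)` for every `(k, l) ∈ 𝒜`. -/
theorem stmt_14 (p q : ℕ) (hp : 2 ≤ p) (hq : 2 ≤ q) (hpq : Nat.Coprime p q)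
    (c : ℕ → ℕ → ℂ) :
    ∃! a : ℕ → ℕ → ℂ,
      (∀ i j : ℕ, ¬(1 ≤ i ∧ i ≤ p - 1 ∧ 1 ≤ j ∧ j ≤ q - 1) → a i j = 0) ∧
      (∀ i j : ℕ, 1 ≤ i → i ≤ p - 1 → 1 ≤ j → j ≤ q - 1 → a i j = a (p - i) (q - j)) ∧
      (∀ k l : ℕ, 1 ≤ k → k ≤ p - 1 → 1 ≤ l → l ≤ q - 1 → k % 2 = l % 2 →
        ∑ i ∈ Finset.Icc 1 (p - 1), ∑ j ∈ Finset.Icc 1 (q - 1),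
            a i j * ((Real.sin (Real.pi * i * k / p) : ℝ) : ℂ) *
              ((Real.sin (Real.pi * j * l / q) : ℝ) : ℂ) = c k l) :=
  stmt_14_general p q c
end
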